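/- (Landau-type lemma for Mellin transforms) Suppose $A : [1,\infty) \to \mathbb{R}$ is bounded and Riemann integrable on every interval $[1,X]$, and $A(x) \ge 0$ for all $x > X_0$. Let $\sigma_c$ be the infimum of those real $\sigma$ for which $\int_{X_0}^{\infty} A(x) x^{-\sigma}\,dx < \infty$. Then $F(s) = \int_1^{\infty} A(x) x^{-s}\,dx$ defines an analytic function on the half-plane $\Re(s) > \sigma_c$ which cannot be analytically continued to a neighborhood of the point $s = \sigma_c$. -/

import Mathlib

open MeasureTheory Set

private lemma landau_log_pow_le (k : ℕ) {ε : ℝ} (hε : 0 < ε) :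
    ∃ C : ℝ, 0 < C ∧ ∀ x : ℝ, 1 ≤ x → (Real.log x) ^ k ≤ C * x ^ ε := by
  rcases Nat.eq_zero_or_pos k with hk | hk
  · refine ⟨1, one_pos, fun x hx => ?_⟩
    rw [hk]
    simp only [pow_zero, one_mul]
    calc (1:ℝ) = 1 ^ ε := (Real.one_rpow ε).symm
    _ ≤ x ^ ε := Real.rpow_le_rpow (by norm_num) hx hε.le
  · have hk0 : (0:ℝ) < k := by exact_mod_cast hk
    set a : ℝ := ε / k with ha_def
    have ha : 0 < a := div_pos hε hk0
    refine ⟨(1/a) ^ k, pow_pos (by positivity) k, fun x hx => ?_⟩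
    have hx0 : (0:ℝ) < x := lt_of_lt_of_le one_pos hx
    have h1 : Real.log x ≤ x ^ a / a := Real.log_le_rpow_div hx0.le ha
    have h2 : (Real.log x) ^ k ≤ (x ^ a / a) ^ k :=
      pow_le_pow_left₀ (Real.log_nonneg hx) h1 k
    have hxa : (x ^ a) ^ (k : ℕ) = x ^ ε := by
      rw [← Real.rpow_natCast (x ^ a) k, ← Real.rpow_mul hx0.le]
      congr 1
      field_simp [ha_def]
      rw [ha_def, div_mul_cancel₀ ε hk0.ne']
    have h3 : (x ^ a / a) ^ k = (1/a) ^ k * x ^ ε := by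
      rw [div_pow, hxa, one_div, inv_pow]
      ring
    rw [h3] at h2
    exact h2

set_option maxHeartbeats 2000000 in
/-- Landau-type lemma for Mellin transforms: if `A` is eventually nonnegative,
then the abscissa of convergence `σc` of `F(s) = ∫_1^∞ A(x) x^{-s} dx` is a
singularity: `F` is analytic on `Re s > σc` but admits no analytic continuation
to a neighbourhood of `σc`. -/
theorem landau_mellin (A : ℝ → ℝ) (X₀ : ℝ) (hX₀ : 1 ≤ X₀)
    (hbdd : ∀ X : ℝ, 1 ≤ X → ∃ M : ℝ, ∀ x ∈ Icc (1 : ℝ) X, |A x| ≤ M)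
    (hint : ∀ X : ℝ, 1 ≤ X → IntervalIntegrable A MeasureTheory.volume 1 X)
    (hpos : ∀ x : ℝ, X₀ < x → 0 ≤ A x)
    (hconv : ∃ σ : ℝ, IntegrableOn (fun x => A x * x ^ (-σ)) (Ioi X₀))
    (hdiv : ∃ σ : ℝ, ¬ IntegrableOn (fun x => A x * x ^ (-σ)) (Ioi X₀)) :
    letI σc : ℝ := sInf {σ : ℝ | IntegrableOn (fun x => A x * x ^ (-σ)) (Ioi X₀)}
    letI F : ℂ → ℂ := fun s => ∫ x in Ioi (1 : ℝ), (A x : ℂ) * (x : ℂ) ^ (-s)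
    AnalyticOn ℂ F {s : ℂ | σc < s.re} ∧
      ¬ ∃ (G : ℂ → ℂ) (U : Set ℂ), IsOpen U ∧ (σc : ℂ) ∈ U ∧ AnalyticOn ℂ G U ∧
          ∀ s ∈ U, σc < s.re → G s = F s := by
  set S : Set ℝ := {σ : ℝ | IntegrableOn (fun x => A x * x ^ (-σ)) (Ioi X₀)} with hS_def
  set σc : ℝ := sInf S with hσc_def
  set F : ℂ → ℂ := fun s => ∫ x in Ioi (1 : ℝ), (A x : ℂ) * (x : ℂ) ^ (-s) with hF_def
  -- measurability of A on (1, ∞)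
  have hAm : AEStronglyMeasurable A (volume.restrict (Ioi (1:ℝ))) := by
    have hU : Ioi (1:ℝ) = ⋃ n : ℕ, Ioc (1:ℝ) (n+1) := by
      ext x
      simp only [mem_Ioi, mem_iUnion, mem_Ioc]
      constructor
      · intro hx
        obtain ⟨n, hn⟩ := exists_nat_ge x
        exact ⟨n, hx, hn.trans (by linarith)⟩
      · rintro ⟨n, h, _⟩; exact h
    rw [hU, aestronglyMeasurable_iUnion_iff]
    intro n
    have h1 : (1:ℝ) ≤ (n:ℝ)+1 := le_add_of_nonneg_left n.cast_nonneg
    exact ((intervalIntegrable_iff_integrableOn_Ioc_of_le h1).mp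
      (hint _ h1)).aestronglyMeasurable
  have hAm' : AEStronglyMeasurable A (volume.restrict (Ioi X₀)) :=
    hAm.mono_set (Ioi_subset_Ioi hX₀)
  -- S is upward closed
  have hup : ∀ σ τ : ℝ, σ ∈ S → σ ≤ τ → τ ∈ S := by
    intro σ τ hσ hστ
    have hms : AEStronglyMeasurable (fun x : ℝ => A x * x ^ (-τ))
        (volume.restrict (Ioi X₀)) :=
      hAm'.mul (by measurability : Measurable fun x : ℝ => x ^ (-τ)).aestronglyMeasurable
    refine Integrable.mono' hσ hms ?_
    rw [ae_restrict_iff' measurableSet_Ioi]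
    filter_upwards with x hx
    have hx1 : (1:ℝ) ≤ x := le_of_lt (lt_of_le_of_lt hX₀ hx)
    have hA0 : 0 ≤ A x := hpos x hx
    rw [Real.norm_eq_abs, abs_mul, abs_of_nonneg hA0,
      abs_of_nonneg (Real.rpow_nonneg (by linarith) _)]
    exact mul_le_mul_of_nonneg_left
      (Real.rpow_le_rpow_of_exponent_le hx1 (neg_le_neg hστ)) hA0
  have hSne : S.Nonempty := hconv
  have hbb : BddBelow S := by
    obtain ⟨σ', hσ'⟩ := hdiv
    exact ⟨σ', fun σ hσ => le_of_not_gt fun h => hσ' (hup σ σ' hσ h.le)⟩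
  -- |A| * x^(-σ) is integrable on (1,∞) for σ ∈ S
  have h0 : ∀ σ ∈ S, IntegrableOn (fun x : ℝ => |A x| * x ^ (-σ)) (Ioi 1) := by
    intro σ hσ
    rw [show Ioi (1:ℝ) = Ioc 1 X₀ ∪ Ioi X₀ from (Ioc_union_Ioi_eq_Ioi hX₀).symm]
    apply IntegrableOn.union
    · obtain ⟨M, hM⟩ := hbdd X₀ hX₀
      obtain ⟨C, hC⟩ : ∃ C : ℝ, ∀ x ∈ Icc (1:ℝ) X₀, ‖x ^ (-σ)‖ ≤ C :=
        isCompact_Icc.exists_bound_of_continuousOn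
          (ContinuousOn.rpow_const continuousOn_id fun x hx =>
            Or.inl (ne_of_gt (lt_of_lt_of_le one_pos hx.1)))
      have hMnn : 0 ≤ M := le_trans (abs_nonneg _) (hM 1 ⟨le_refl 1, hX₀⟩)
      refine Integrable.mono' (g := fun _ => M * C)
        (integrableOn_const measure_Ioc_lt_top.ne)
        ((continuous_abs.comp_aestronglyMeasurable (hAm.mono_set Ioc_subset_Ioi_self)).mul
          (by measurability : Measurable fun x : ℝ => x ^ (-σ)).aestronglyMeasurable) ?_
      rw [ae_restrict_iff' measurableSet_Ioc]
      filter_upwards with x hx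
      have hxI : x ∈ Icc (1:ℝ) X₀ := ⟨hx.1.le, hx.2⟩
      have h1 := hM x hxI
      have h2 := hC x hxI
      rw [Real.norm_eq_abs] at h2 ⊢
      rw [abs_mul, abs_abs]
      exact mul_le_mul h1 h2 (abs_nonneg _) hMnn
    · refine (hσ : IntegrableOn _ _ _).congr ?_
      filter_upwards [ae_restrict_mem measurableSet_Ioi] with x hx
      rw [abs_of_nonneg (hpos x hx)]
  -- with log powers, for τ > σ ∈ S
  have habs : ∀ (n : ℕ) (σ τ : ℝ), σ ∈ S → σ < τ →
      IntegrableOn (fun x : ℝ => |A x| * (Real.log x) ^ n * x ^ (-τ)) (Ioi 1) := by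
    intro n σ τ hσ hστ
    obtain ⟨C, hCpos, hC⟩ := landau_log_pow_le n (show (0:ℝ) < τ - σ by linarith)
    refine Integrable.mono' ((h0 σ hσ).const_mul C)
      (((continuous_abs.comp_aestronglyMeasurable hAm).mul
        ((Real.measurable_log.pow_const n).aestronglyMeasurable)).mul
        (by measurability : Measurable fun x : ℝ => x ^ (-τ)).aestronglyMeasurable) ?_
    rw [ae_restrict_iff' measurableSet_Ioi]
    filter_upwards with x hx
    have hx1 : (1:ℝ) ≤ x := hx.le
    have hx0 : (0:ℝ) < x := lt_of_lt_of_le one_pos hx1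
    have hlog : 0 ≤ Real.log x := Real.log_nonneg hx1
    rw [Real.norm_eq_abs, abs_mul, abs_mul, abs_abs, abs_of_nonneg (pow_nonneg hlog n),
      abs_of_nonneg (Real.rpow_nonneg hx0.le _)]
    have key : (Real.log x) ^ n * x ^ (-τ) ≤ C * x ^ (-σ) := by
      calc (Real.log x) ^ n * x ^ (-τ) ≤ (C * x ^ (τ - σ)) * x ^ (-τ) :=
            mul_le_mul_of_nonneg_right (hC x hx1) (Real.rpow_nonneg hx0.le _)
        _ = C * x ^ (-σ) := by
            rw [mul_assoc, ← Real.rpow_add hx0]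
            ring_nf
    calc |A x| * (Real.log x) ^ n * x ^ (-τ) = |A x| * ((Real.log x) ^ n * x ^ (-τ)) := by
          ring
      _ ≤ |A x| * (C * x ^ (-σ)) := mul_le_mul_of_nonneg_left key (abs_nonneg _)
      _ = C * (|A x| * x ^ (-σ)) := by ring
  -- norm of the complex integrand
  have hnorm : ∀ (n : ℕ) (s : ℂ) (x : ℝ), 1 ≤ x →
      ‖(A x : ℂ) * ((Real.log x : ℝ) : ℂ) ^ n * (x : ℂ) ^ (-s)‖
        = |A x| * (Real.log x) ^ n * x ^ (-s.re) := by
    intro n s x hx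
    have hx0 : (0:ℝ) < x := lt_of_lt_of_le one_pos hx
    rw [norm_mul, norm_mul, norm_pow, Complex.norm_real, Complex.norm_real,
      Real.norm_eq_abs, Real.norm_eq_abs, abs_of_nonneg (Real.log_nonneg hx),
      Complex.norm_cpow_eq_rpow_re_of_pos hx0, Complex.neg_re]
  -- complex integrability
  have hCint : ∀ (n : ℕ) (s : ℂ), σc < s.re →
      IntegrableOn (fun x : ℝ => (A x : ℂ) * ((Real.log x : ℝ) : ℂ) ^ n * (x : ℂ) ^ (-s))
        (Ioi 1) := by
    intro n s hs
    obtain ⟨σ, hσS, hσlt⟩ := exists_lt_of_csInf_lt hSne (hσc_def ▸ hs)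
    refine Integrable.mono' (habs n σ s.re hσS hσlt)
      (((Complex.continuous_ofReal.comp_aestronglyMeasurable hAm).mul
        ((Complex.measurable_ofReal.comp Real.measurable_log).pow_const
          n).aestronglyMeasurable).mul
        (by measurability : Measurable fun x : ℝ => (x:ℂ) ^ (-s)).aestronglyMeasurable) ?_
    rw [ae_restrict_iff' measurableSet_Ioi]
    filter_upwards with x hx
    rw [hnorm n s x hx.le]
  -- the family of integrals Fn
  set Fn : ℕ → ℂ → ℂ := fun n s =>
    ∫ x in Ioi (1:ℝ), (A x : ℂ) * ((Real.log x : ℝ) : ℂ) ^ n * (x : ℂ) ^ (-s) with hFn_def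
  have hF0 : F = Fn 0 := by
    funext s
    simp only [hF_def, hFn_def, pow_zero, mul_one]
  -- the derivative recursion
  have hderiv : ∀ (n : ℕ) (s : ℂ), σc < s.re → HasDerivAt (Fn n) (-Fn (n+1) s) s := by
    intro n s hs
    obtain ⟨σ, hσS, hσlt⟩ := exists_lt_of_csInf_lt hSne (hσc_def ▸ hs)
    set ε : ℝ := (s.re - σ)/2 with hε_def
    have hε : 0 < ε := by simp only [hε_def]; linarith
    obtain ⟨C, hCpos, hC⟩ := landau_log_pow_le (n+1) hε
    have key : Integrable (fun x : ℝ =>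
          -((A x : ℂ) * ((Real.log x : ℝ) : ℂ) ^ (n+1) * (x:ℂ) ^ (-s)))
          (volume.restrict (Ioi 1)) ∧
        HasDerivAt (fun w => ∫ x in Ioi (1:ℝ),
            (A x : ℂ) * ((Real.log x : ℝ) : ℂ) ^ n * (x : ℂ) ^ (-w))
          (∫ x in Ioi (1:ℝ),
            -((A x : ℂ) * ((Real.log x : ℝ) : ℂ) ^ (n+1) * (x:ℂ) ^ (-s))) s := by
      refine hasDerivAt_integral_of_dominated_loc_of_deriv_le (𝕜 := ℂ) (E := ℂ)
        (F := fun w x => (A x : ℂ) * ((Real.log x : ℝ) : ℂ) ^ n * (x : ℂ) ^ (-w))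
        (F' := fun w x => -((A x : ℂ) * ((Real.log x : ℝ) : ℂ) ^ (n+1) * (x:ℂ) ^ (-w)))
        (bound := fun x => C * (|A x| * x ^ (-σ))) (Metric.ball_mem_nhds s hε) ?_ ?_ ?_ ?_ ?_ ?_
      · exact Filter.Eventually.of_forall fun w =>
          ((Complex.continuous_ofReal.comp_aestronglyMeasurable hAm).mul
            ((Complex.measurable_ofReal.comp Real.measurable_log).pow_const
              n).aestronglyMeasurable).mul
            (by measurability : Measurable fun x : ℝ => (x:ℂ) ^ (-w)).aestronglyMeasurable
      · exact hCint n s hs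
      · exact (((Complex.continuous_ofReal.comp_aestronglyMeasurable hAm).mul
            ((Complex.measurable_ofReal.comp Real.measurable_log).pow_const
              (n+1)).aestronglyMeasurable).mul
            (by measurability : Measurable fun x : ℝ => (x:ℂ) ^ (-s)).aestronglyMeasurable).neg
      · -- the bound
        rw [ae_restrict_iff' measurableSet_Ioi]
        filter_upwards with x hx
        intro w hw
        have hx1 : (1:ℝ) ≤ x := hx.le
        have hx0 : (0:ℝ) < x := lt_of_lt_of_le one_pos hx1
        have hwre : σ + ε ≤ w.re := by
          have h1 : |(w - s).re| ≤ ‖w - s‖ := Complex.abs_re_le_norm _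
          have h2 : ‖w - s‖ < ε := by
            rw [← Complex.dist_eq]
            exact Metric.mem_ball.mp hw
          have h3 : |w.re - s.re| < ε := lt_of_le_of_lt (by simpa using h1) h2
          have h4 : s.re - w.re < ε := by
            have := abs_lt.mp h3
            linarith [this.1]
          simp only [hε_def] at h4 ⊢
          linarith
        rw [norm_neg, hnorm (n+1) w x hx1]
        have hlog : 0 ≤ Real.log x := Real.log_nonneg hx1
        have hstep1 : x ^ (-w.re) ≤ x ^ (-(σ + ε)) :=
          Real.rpow_le_rpow_of_exponent_le hx1 (by linarith)
        have hstep2 : (Real.log x) ^ (n+1) * x ^ (-w.re)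
            ≤ (C * x ^ ε) * x ^ (-(σ + ε)) :=
          mul_le_mul (hC x hx1) hstep1 (Real.rpow_nonneg hx0.le _) (by positivity)
        have hstep3 : (C * x ^ ε) * x ^ (-(σ + ε)) = C * x ^ (-σ) := by
          rw [mul_assoc, ← Real.rpow_add hx0]
          ring_nf
        calc |A x| * (Real.log x) ^ (n+1) * x ^ (-w.re)
            = |A x| * ((Real.log x) ^ (n+1) * x ^ (-w.re)) := by ring
          _ ≤ |A x| * (C * x ^ (-σ)) := by
              refine mul_le_mul_of_nonneg_left ?_ (abs_nonneg _)
              rw [← hstep3]; exact hstep2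
          _ = C * (|A x| * x ^ (-σ)) := by ring
      · exact (h0 σ hσS).const_mul C
      · -- pointwise derivative
        rw [ae_restrict_iff' measurableSet_Ioi]
        filter_upwards with x hx
        intro w _
        have hx0 : (0:ℝ) < x := lt_of_lt_of_le one_pos hx.le
        have hne : (x:ℂ) ≠ 0 := by
          simp only [ne_eq, Complex.ofReal_eq_zero]
          exact ne_of_gt hx0
        have h2 : HasDerivAt (fun w : ℂ => (x:ℂ) ^ (-w))
            (-((x:ℂ) ^ (-w) * Complex.log (x:ℂ))) w := by
          have h3 := (Complex.hasStrictDerivAt_const_cpow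
            (x := (x:ℂ)) (y := -w) (Or.inl hne)).hasDerivAt
          have h4 := h3.comp w (hasDerivAt_neg w)
          simpa [Function.comp_def] using h4
        have h5 := h2.const_mul ((A x : ℂ) * ((Real.log x : ℝ) : ℂ) ^ n)
        have h6 : (A x : ℂ) * ((Real.log x : ℝ) : ℂ) ^ n
            * -((x:ℂ) ^ (-w) * Complex.log (x:ℂ))
            = -((A x : ℂ) * ((Real.log x : ℝ) : ℂ) ^ (n+1) * (x:ℂ) ^ (-w)) := by
          rw [← Complex.ofReal_log hx0.le]
          ring
        rw [← h6]
        convert h5 using 2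
    have h1 : (∫ x in Ioi (1:ℝ),
        -((A x : ℂ) * ((Real.log x : ℝ) : ℂ) ^ (n+1) * (x : ℂ) ^ (-s)))
        = -Fn (n+1) s := by
      rw [integral_neg]
    rw [h1] at key
    exact key.2
  -- the open half-plane
  have hHopen : IsOpen {s : ℂ | σc < s.re} := isOpen_lt continuous_const Complex.continuous_re
  -- iterated derivatives
  have hiter : ∀ (n : ℕ) (s : ℂ), σc < s.re →
      iteratedDeriv n F s = (-1:ℂ)^n * Fn n s := by
    intro n
    induction n with
    | zero =>
      intro s hs
      rw [iteratedDeriv_zero, hF0]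
      simp
    | succ n ih =>
      intro s hs
      rw [iteratedDeriv_succ]
      have hev : iteratedDeriv n F =ᶠ[nhds s] fun w => (-1:ℂ)^n * Fn n w := by
        filter_upwards [hHopen.mem_nhds hs] with w hw using ih w hw
      rw [hev.deriv_eq, (((hderiv n s hs).const_mul ((-1:ℂ)^n)).deriv)]
      ring
  constructor
  · -- analyticity
    refine DifferentiableOn.analyticOn ?_ hHopen
    intro s hs
    have hd := (hderiv 0 s hs).differentiableAt
    rw [← hF0] at hd
    exact hd.differentiableWithinAt
  · -- no analytic continuation
    rintro ⟨G, U, hUo, hUmem, hGa, hagree⟩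
    obtain ⟨r, hrpos, hrball⟩ := Metric.isOpen_iff.mp hUo _ hUmem
    set δ : ℝ := r/4 with hδ_def
    have hδ : 0 < δ := by positivity
    set σ₁ : ℝ := σc + δ with hσ₁_def
    set σ₂ : ℝ := σc - δ with hσ₂_def
    have hσ₁re : σc < ((σ₁:ℝ):ℂ).re := by
      rw [Complex.ofReal_re]
      simp only [hσ₁_def]
      linarith
    have hdist1 : dist ((σ₁:ℝ):ℂ) ((σc:ℝ):ℂ) = δ := by
      rw [Complex.dist_eq]
      have he : ((σ₁:ℝ):ℂ) - ((σc:ℝ):ℂ) = ((δ:ℝ):ℂ) := by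
        simp only [hσ₁_def]
        push_cast
        ring
      rw [he, Complex.norm_real, Real.norm_eq_abs, abs_of_pos hδ]
    have hsub : Metric.ball ((σ₁:ℝ):ℂ) (3*δ) ⊆ U := by
      intro z hz
      apply hrball
      rw [Metric.mem_ball] at hz ⊢
      calc dist z ((σc:ℝ):ℂ) ≤ dist z ((σ₁:ℝ):ℂ) + dist ((σ₁:ℝ):ℂ) ((σc:ℝ):ℂ) :=
            dist_triangle _ _ _
        _ < 3*δ + δ := by rw [hdist1]; linarith
        _ = r := by rw [hδ_def]; ring
    have hGd : DifferentiableOn ℂ G (Metric.ball ((σ₁:ℝ):ℂ) (3*δ)) :=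
      (hGa.differentiableOn).mono hsub
    have hz2 : ((σ₂:ℝ):ℂ) ∈ Metric.ball ((σ₁:ℝ):ℂ) (3*δ) := by
      rw [Metric.mem_ball, Complex.dist_eq]
      have he : ((σ₂:ℝ):ℂ) - ((σ₁:ℝ):ℂ) = ((-(2*δ):ℝ):ℂ) := by
        simp only [hσ₁_def, hσ₂_def]
        push_cast
        ring
      rw [he, Complex.norm_real, Real.norm_eq_abs, abs_of_neg (by linarith)]
      linarith
    have hsumC := Complex.hasSum_taylorSeries_on_ball hGd hz2
    -- iterated derivatives of G and F agree at σ₁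
    have hGFiter : ∀ n, iteratedDeriv n G ((σ₁:ℝ):ℂ) = iteratedDeriv n F ((σ₁:ℝ):ℂ) := by
      intro n
      apply Filter.EventuallyEq.iteratedDeriv_eq
      have hmem : U ∩ {s : ℂ | σc < s.re} ∈ nhds ((σ₁:ℝ):ℂ) := by
        apply IsOpen.mem_nhds (hUo.inter hHopen)
        refine ⟨hrball ?_, hσ₁re⟩
        rw [Metric.mem_ball, hdist1, hδ_def]
        linarith
      filter_upwards [hmem]
      rintro w ⟨hw1, hw2⟩
      exact hagree w hw1 hw2
    have hσ₁S : sInf S < σ₁ := by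
      rw [← hσc_def, hσ₁_def]
      linarith
    have hRint : ∀ n : ℕ, IntegrableOn
        (fun x : ℝ => A x * (Real.log x) ^ n * x ^ (-σ₁)) (Ioi 1) := by
      intro n
      obtain ⟨σ, hσS, hσlt⟩ := exists_lt_of_csInf_lt hSne hσ₁S
      refine Integrable.mono' (habs n σ σ₁ hσS hσlt)
        ((hAm.mul
          ((Real.measurable_log.pow_const n).aestronglyMeasurable)).mul
          (by measurability : Measurable fun x : ℝ => x ^ (-σ₁)).aestronglyMeasurable) ?_
      rw [ae_restrict_iff' measurableSet_Ioi]
      filter_upwards with x hx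
      have hx1 : (1:ℝ) ≤ x := hx.le
      have hx0 : (0:ℝ) < x := lt_of_lt_of_le one_pos hx1
      have hlog : 0 ≤ Real.log x := Real.log_nonneg hx1
      rw [Real.norm_eq_abs, abs_mul, abs_mul, abs_of_nonneg (pow_nonneg hlog n),
        abs_of_nonneg (Real.rpow_nonneg hx0.le _)]
    -- real-valued integrals
    set In : ℕ → ℝ := fun n => ∫ x in Ioi (1:ℝ), A x * (Real.log x) ^ n * x ^ (-σ₁)
      with hIn_def
    have hInC : ∀ n, Fn n ((σ₁:ℝ):ℂ) = ((In n : ℝ) : ℂ) := by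
      intro n
      have hcongr : Fn n ((σ₁:ℝ):ℂ)
          = ∫ x in Ioi (1:ℝ), Complex.ofRealCLM (A x * (Real.log x) ^ n * x ^ (-σ₁)) := by
        simp only [hFn_def]
        refine setIntegral_congr_fun measurableSet_Ioi fun x hx => ?_
        have hx0 : (0:ℝ) ≤ x := le_of_lt (lt_of_lt_of_le one_pos hx.le)
        simp only [Complex.ofRealCLM_apply, Complex.ofReal_mul, Complex.ofReal_pow,
          Complex.ofReal_cpow hx0, Complex.ofReal_neg]
      rw [hcongr, ContinuousLinearMap.integral_comp_comm _ (hRint n)]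
      simp only [hIn_def, Complex.ofRealCLM_apply]
    set t : ℕ → ℝ := fun n => In n * ((2*δ)^n / n.factorial) with ht_def
    have hterm : ∀ n : ℕ, ((n.factorial : ℂ))⁻¹ • (((σ₂:ℝ):ℂ) - ((σ₁:ℝ):ℂ))^n •
        iteratedDeriv n G ((σ₁:ℝ):ℂ) = ((t n : ℝ) : ℂ) := by
      intro n
      rw [hGFiter n, hiter n _ hσ₁re, hInC n]
      have h12 : (((σ₂:ℝ):ℂ) - ((σ₁:ℝ):ℂ)) = ((-(2*δ):ℝ):ℂ) := by
        simp only [hσ₁_def, hσ₂_def]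
        push_cast
        ring
      rw [h12, smul_eq_mul, smul_eq_mul]
      have h13 : ((-(2*δ):ℝ):ℂ)^n * (-1:ℂ)^n = ((2*δ:ℝ):ℂ)^n := by
        rw [← mul_pow]
        congr 1
        push_cast
        ring
      have h14 : ((n.factorial : ℂ))⁻¹ * (((-(2*δ):ℝ):ℂ)^n * ((-1:ℂ)^n * ((In n:ℝ):ℂ)))
          = ((n.factorial : ℂ))⁻¹ * ((((-(2*δ):ℝ):ℂ)^n * (-1:ℂ)^n) * ((In n:ℝ):ℂ)) := by
        ring
      rw [h14, h13]
      simp only [ht_def]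
      push_cast
      ring
    have hsum2 : HasSum (fun n : ℕ => ((t n : ℝ) : ℂ)) (G ((σ₂:ℝ):ℂ)) := by
      have hfun : (fun n : ℕ => ((t n : ℝ) : ℂ))
          = fun n : ℕ => ((n.factorial : ℂ))⁻¹ • (((σ₂:ℝ):ℂ) - ((σ₁:ℝ):ℂ))^n •
            iteratedDeriv n G ((σ₁:ℝ):ℂ) := funext fun n => (hterm n).symm
      rw [hfun]
      exact hsumC
    have ht_summable : Summable t := by
      have h1 := hsum2.mapL Complex.reCLM
      simp only [Complex.reCLM_apply, Complex.ofReal_re] at h1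
      exact h1.summable
    -- split the integral at X₀
    set J : ℕ → ℝ := fun n => ∫ x in Ioc (1:ℝ) X₀, A x * (Real.log x) ^ n * x ^ (-σ₁)
      with hJ_def
    set K : ℕ → ℝ := fun n => ∫ x in Ioi X₀, A x * (Real.log x) ^ n * x ^ (-σ₁)
      with hK_def
    have hsplit : ∀ n, In n = J n + K n := by
      intro n
      simp only [hIn_def, hJ_def, hK_def]
      rw [show Ioi (1:ℝ) = Ioc 1 X₀ ∪ Ioi X₀ from (Ioc_union_Ioi_eq_Ioi hX₀).symm]
      exact setIntegral_union (Ioc_disjoint_Ioi le_rfl) measurableSet_Ioi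
        ((hRint n).mono_set Ioc_subset_Ioi_self)
        ((hRint n).mono_set (Ioi_subset_Ioi hX₀))
    have hKnn : ∀ n, 0 ≤ K n := by
      intro n
      refine setIntegral_nonneg measurableSet_Ioi fun x hx => ?_
      have hx1 : (1:ℝ) ≤ x := le_of_lt (lt_of_le_of_lt hX₀ hx)
      exact mul_nonneg (mul_nonneg (hpos x hx)
        (pow_nonneg (Real.log_nonneg hx1) n)) (Real.rpow_nonneg (by linarith) _)
    set u : ℕ → ℝ := fun n => J n * ((2*δ)^n / n.factorial) with hu_def
    set v : ℕ → ℝ := fun n => K n * ((2*δ)^n / n.factorial) with hv_def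
    have htuv : ∀ n, t n = u n + v n := by
      intro n
      simp only [ht_def, hu_def, hv_def, hsplit n]
      ring
    -- u is summable
    have hu_summable : Summable u := by
      obtain ⟨M, hM⟩ := hbdd X₀ hX₀
      have hMnn : 0 ≤ M := le_trans (abs_nonneg _) (hM 1 ⟨le_refl 1, hX₀⟩)
      obtain ⟨C₀, hC₀⟩ : ∃ C : ℝ, ∀ x ∈ Icc (1:ℝ) X₀, ‖x ^ (-σ₁)‖ ≤ C :=
        isCompact_Icc.exists_bound_of_continuousOn
          (ContinuousOn.rpow_const continuousOn_id fun x hx =>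
            Or.inl (ne_of_gt (lt_of_lt_of_le one_pos hx.1)))
      have hC₀nn : 0 ≤ C₀ := le_trans (norm_nonneg _) (hC₀ 1 ⟨le_refl 1, hX₀⟩)
      set L : ℝ := Real.log X₀ with hL_def
      have hLnn : 0 ≤ L := Real.log_nonneg hX₀
      have hJbound : ∀ n, |J n| ≤ M * C₀ * L^n * (X₀ - 1) := by
        intro n
        have h1 : ‖∫ x in Ioc (1:ℝ) X₀, A x * (Real.log x) ^ n * x ^ (-σ₁)‖
            ≤ (M * C₀ * L^n) * (volume (Ioc (1:ℝ) X₀)).toReal := by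
          refine norm_setIntegral_le_of_norm_le_const measure_Ioc_lt_top ?_
          intro x hx
          have hx1 : (1:ℝ) ≤ x := hx.1.le
          have hx0 : (0:ℝ) < x := lt_of_lt_of_le one_pos hx1
          have hlog : 0 ≤ Real.log x := Real.log_nonneg hx1
          have hlogle : Real.log x ≤ L := by
            rw [hL_def]
            exact Real.log_le_log hx0 hx.2
          rw [Real.norm_eq_abs, abs_mul, abs_mul,
            abs_of_nonneg (pow_nonneg hlog n), abs_of_nonneg (Real.rpow_nonneg hx0.le _)]
          have e1 : |A x| ≤ M := hM x ⟨hx1, hx.2⟩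
          have e2 : (Real.log x)^n ≤ L^n := pow_le_pow_left₀ hlog hlogle n
          have e3 : x ^ (-σ₁) ≤ C₀ := by
            have := hC₀ x ⟨hx1, hx.2⟩
            rw [Real.norm_eq_abs] at this
            exact le_trans (le_abs_self _) this
          calc |A x| * (Real.log x)^n * x^(-σ₁) ≤ M * L^n * C₀ := by
                refine mul_le_mul (mul_le_mul e1 e2 (pow_nonneg hlog n) hMnn) e3
                  (Real.rpow_nonneg hx0.le _) (by positivity)
            _ = M * C₀ * L^n := by ring
        rw [Real.volume_Ioc, ENNReal.toReal_ofReal (by linarith)] at h1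
        have h2 : |J n| = ‖∫ x in Ioc (1:ℝ) X₀, A x * (Real.log x) ^ n * x ^ (-σ₁)‖ := by
          simp only [hJ_def, Real.norm_eq_abs]
        rw [h2]
        calc ‖∫ x in Ioc (1:ℝ) X₀, A x * (Real.log x) ^ n * x ^ (-σ₁)‖
            ≤ (M * C₀ * L^n) * (X₀ - 1) := h1
          _ = M * C₀ * L^n * (X₀ - 1) := by ring
      refine Summable.of_norm_bounded
        (g := fun n => (M * C₀ * (X₀ - 1)) * ((2*δ*L)^n / n.factorial)) ?_ ?_
      · exact (Real.summable_pow_div_factorial (2*δ*L)).mul_left _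
      · intro n
        simp only [hu_def]
        have h2 : ‖J n * ((2*δ)^n / n.factorial)‖ = |J n| * ((2*δ)^n / n.factorial) := by
          rw [Real.norm_eq_abs, abs_mul]
          congr 1
          exact abs_of_nonneg (by positivity)
        rw [h2]
        calc |J n| * ((2*δ)^n / n.factorial)
            ≤ (M * C₀ * L^n * (X₀ - 1)) * ((2*δ)^n / n.factorial) :=
              mul_le_mul_of_nonneg_right (hJbound n) (by positivity)
          _ = (M * C₀ * (X₀ - 1)) * ((2*δ*L)^n / n.factorial) := by
              rw [mul_pow (2*δ) L n]
              ring
    have hv_summable : Summable v := by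
      have h1 : Summable (fun n => t n - u n) := ht_summable.sub hu_summable
      refine h1.congr fun n => ?_
      rw [htuv n]
      ring
    have hvnn : ∀ n, 0 ≤ v n := fun n => mul_nonneg (hKnn n) (by positivity)
    -- Tonelli
    set g : ℕ → ℝ → ℝ := fun n x =>
      A x * (Real.log x) ^ n * x ^ (-σ₁) * ((2*δ)^n / n.factorial) with hg_def
    have hgint : ∀ n, IntegrableOn (g n) (Ioi X₀) := fun n =>
      ((hRint n).mono_set (Ioi_subset_Ioi hX₀)).mul_const _
    have hgnn : ∀ n, ∀ x ∈ Ioi X₀, 0 ≤ g n x := by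
      intro n x hx
      have hx1 : (1:ℝ) ≤ x := le_of_lt (lt_of_le_of_lt hX₀ hx)
      exact mul_nonneg (mul_nonneg (mul_nonneg (hpos x hx)
        (pow_nonneg (Real.log_nonneg hx1) n)) (Real.rpow_nonneg (by linarith) _))
        (by positivity)
    have hgeq : ∀ n, ∫ x in Ioi X₀, g n x = v n := by
      intro n
      simp only [hg_def, hv_def, hK_def]
      exact integral_mul_const _ _
    have hptwise : ∀ x ∈ Ioi X₀, HasSum (fun n => g n x) (A x * x ^ (-σ₂)) := by
      intro x hx
      have hx1 : (1:ℝ) ≤ x := le_of_lt (lt_of_le_of_lt hX₀ hx)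
      have hx0 : (0:ℝ) < x := lt_of_lt_of_le one_pos hx1
      have hexp : HasSum (fun n : ℕ => (2*δ*Real.log x)^n / n.factorial)
          (Real.exp (2*δ*Real.log x)) := by
        rw [Real.exp_eq_exp_ℝ]
        exact NormedSpace.expSeries_div_hasSum_exp (2*δ*Real.log x)
      have h1 := hexp.mul_left (A x * x ^ (-σ₁))
      have h2 : (fun n : ℕ => (A x * x ^ (-σ₁)) * ((2*δ*Real.log x)^n / n.factorial))
          = fun n => g n x := by
        funext n
        simp only [hg_def, mul_pow]
        ring
      rw [h2] at h1
      have h3 : (A x * x ^ (-σ₁)) * Real.exp (2*δ*Real.log x) = A x * x ^ (-σ₂) := by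
        have e1 : Real.exp (2*δ*Real.log x) = x ^ (2*δ) := by
          rw [Real.rpow_def_of_pos hx0]
          ring_nf
        rw [e1, mul_assoc, ← Real.rpow_add hx0]
        congr 1
        simp only [hσ₁_def, hσ₂_def]
        ring
      rw [h3] at h1
      exact h1
    have hgmeas : ∀ n : ℕ, AEMeasurable (fun x => ENNReal.ofReal (g n x))
        (volume.restrict (Ioi X₀)) := fun n =>
      ENNReal.measurable_ofReal.comp_aemeasurable
        (hgint n).aestronglyMeasurable.aemeasurable
    have key : ∫⁻ x in Ioi X₀, ENNReal.ofReal (A x * x ^ (-σ₂)) < ⊤ := by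
      have h1 : ∀ᵐ x ∂(volume.restrict (Ioi X₀)),
          ENNReal.ofReal (A x * x ^ (-σ₂)) = ∑' n, ENNReal.ofReal (g n x) := by
        rw [ae_restrict_iff' measurableSet_Ioi]
        filter_upwards with x hx
        have hp := hptwise x hx
        rw [← hp.tsum_eq, ENNReal.ofReal_tsum_of_nonneg (fun n => hgnn n x hx) hp.summable]
      rw [lintegral_congr_ae h1, lintegral_tsum hgmeas]
      have h2 : ∀ n, ∫⁻ x in Ioi X₀, ENNReal.ofReal (g n x) = ENNReal.ofReal (v n) := by
        intro n
        rw [← ofReal_integral_eq_lintegral_ofReal (hgint n) ?_, hgeq n]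
        rw [Filter.EventuallyLE, ae_restrict_iff' measurableSet_Ioi]
        filter_upwards with x hx
        exact hgnn n x hx
      rw [tsum_congr h2, ← ENNReal.ofReal_tsum_of_nonneg hvnn hv_summable]
      exact ENNReal.ofReal_lt_top
    have hσ₂S : σ₂ ∈ S := by
      refine ⟨hAm'.mul
        (by measurability : Measurable fun x : ℝ => x ^ (-σ₂)).aestronglyMeasurable, ?_⟩
      rw [hasFiniteIntegral_iff_norm]
      have h1 : ∀ᵐ x ∂(volume.restrict (Ioi X₀)),
          ENNReal.ofReal ‖A x * x ^ (-σ₂)‖ = ENNReal.ofReal (A x * x ^ (-σ₂)) := by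
        rw [ae_restrict_iff' measurableSet_Ioi]
        filter_upwards with x hx
        congr 1
        rw [Real.norm_eq_abs, abs_of_nonneg]
        have hx1 : (1:ℝ) < x := lt_of_le_of_lt hX₀ hx
        exact mul_nonneg (hpos x hx) (Real.rpow_nonneg (by linarith) _)
      rw [lintegral_congr_ae h1]
      exact key
    have hle : σc ≤ σ₂ := by
      rw [hσc_def]
      exact csInf_le hbb hσ₂S
    rw [hσ₂_def] at hle
    linarith
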